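/- arXiv:2407.14205 — 3 statements merged into one kernel-verified Lean document; each statement's English description precedes it below -/
import Mathlib

section
/- Let P be a filtered poset having a least element, R a unital commutative ring, and M an R-module. Then the constant functor M̲ : P^op → R-Mod with value M is lim-acyclic, i.e., H^k(P; M̲) = 0 for every k > 0. -/
/-!
Write `Δ : R-Mod ⥤ (Pᵒᵖ ⥤ R-Mod)` for the constant-diagram functor. It is exact, and it is
right adjoint to `colim`, which is evaluation at the terminal object `op b` of `Pᵒᵖ` and hence
preserves monomorphisms; so `Δ` preserves injectives and carries an injective resolution
`M → I•` to an injective resolution of `Δ M`. Since `Pᵒᵖ` is connected, `lim ∘ Δ ≅ id`, so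
`H^k(P; Δ M)` is the cohomology of `I•` itself, which vanishes for `k > 0`.
-/

open CategoryTheory CategoryTheory.Limits Opposite

/-- The limit functor on a functor category over a preadditive category is additive. -/
instance limAdditive {J C : Type*} [Category J] [Category C] [HasLimitsOfShape J C]
    [Preadditive C] [HasFiniteLimits C] : (lim (J := J) (C := C)).Additive :=
  Functor.additive_of_preserves_binary_products _

/-- The higher limits `H^k(P; F)`: the value at `F : Pᵒᵖ ⥤ R-Mod` of the `k`-th right
derived functor of the limit functor `lim : (Pᵒᵖ ⥤ R-Mod) ⥤ R-Mod`. -/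
noncomputable def higherLim (P : Type) [PartialOrder P] (R : Type) [CommRing R]
    [EnoughInjectives (Pᵒᵖ ⥤ ModuleCat R)] (k : ℕ) (F : Pᵒᵖ ⥤ ModuleCat R) :
    ModuleCat R :=
  ((lim (J := Pᵒᵖ) (C := ModuleCat R)).rightDerived k).obj F

namespace CategoryTheory

section

variable {C D : Type*} [Category C] [Category D] [Abelian C] [Abelian D]

noncomputable def Functor.mapInjectiveResolution (F : C ⥤ D) [F.Additive]
    [F.PreservesInjectiveObjects] [F.PreservesHomology] {Z : C} (I : InjectiveResolution Z) :
    InjectiveResolution (F.obj Z) where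
  cocomplex := (F.mapHomologicalComplex _).obj I.cocomplex
  injective n := F.injective_obj_of_injective (I.injective n)
  ι := (HomologicalComplex.singleMapHomologicalComplex _ _ _).inv.app _ ≫
    (F.mapHomologicalComplex _).map I.ι
  quasiIso := inferInstance

theorem Functor.isZero_rightDerived_obj_obj_succ {E : Type*} [Category E] [Abelian E]
    [EnoughInjectives D] (G : C ⥤ D) [G.Additive] [G.PreservesHomology]
    [G.PreservesInjectiveObjects] (F : D ⥤ E) [F.Additive] [(G ⋙ F).PreservesHomology]
    {X : C} (I : InjectiveResolution X) (n : ℕ) :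
    IsZero ((F.rightDerived (n + 1)).obj (G.obj X)) := by
  refine IsZero.of_iso ?_ ((G.mapInjectiveResolution I).isoRightDerivedObj F (n + 1))
  exact (HomologicalComplex.exactAt_iff_isZero_homology _ _).mp <|
    (I.cocomplex_exactAt_succ n).map (G ⋙ F)

end

section

variable {J C : Type*} [Category J] [Category C]

noncomputable def colimIsoEvaluationOfIsTerminal [HasColimitsOfShape J C] {t : J}
    (ht : IsTerminal t) : (colim : (J ⥤ C) ⥤ C) ≅ (evaluation J C).obj t :=
  NatIso.ofComponents
    (fun F => colimit.isoColimitCocone ⟨_, colimitOfDiagramTerminal ht F⟩)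
    (fun η => colimit.hom_ext fun j => by
      rw [colimit.ι_map_assoc, colimit.isoColimitCocone_ι_hom,
        colimit.isoColimitCocone_ι_hom_assoc]
      exact (η.naturality _).symm)

theorem Functor.preservesInjectiveObjects_const_of_isTerminal [HasColimitsOfShape J C]
    [HasPullbacks C] {t : J} (ht : IsTerminal t) :
    (Functor.const J : C ⥤ J ⥤ C).PreservesInjectiveObjects :=
  have := Functor.PreservesMonomorphisms.of_iso (colimIsoEvaluationOfIsTerminal (C := C) ht).symm
  Functor.preservesInjectiveObjects_of_adjunction_of_preservesMonomorphisms colimConstAdj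

noncomputable def constCompLimIso [IsConnected J] [HasLimitsOfShape J C] :
    Functor.const J ⋙ lim ≅ 𝟭 C :=
  (asIso constLimAdj.unit).symm

theorem preservesHomology_const_comp_lim [IsConnected J] [Abelian C] [HasLimitsOfShape J C] :
    (Functor.const J ⋙ lim : C ⥤ C).PreservesHomology :=
  have := preservesFiniteLimits_of_natIso (constCompLimIso (J := J) (C := C)).symm
  have := preservesFiniteColimits_of_natIso (constCompLimIso (J := J) (C := C)).symm
  inferInstance

end

end CategoryTheory

def isTerminalOpOfForallLE {P : Type*} [Preorder P] {b : P} (hb : ∀ p : P, b ≤ p) :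
    IsTerminal (op b : Pᵒᵖ) :=
  IsTerminal.ofUniqueHom (fun p => (homOfLE (hb p.unop)).op) fun _ _ => Subsingleton.elim _ _

theorem higherLim_const_isZero_of_least_general
    (P : Type) [PartialOrder P]
    (b : P) (hb : ∀ p : P, b ≤ p)
    (R : Type) [CommRing R] [EnoughInjectives (Pᵒᵖ ⥤ ModuleCat R)]
    (M : Type) [AddCommGroup M] [Module R M]
    (k : ℕ) (hk : 0 < k) :
    IsZero (higherLim P R k ((Functor.const Pᵒᵖ).obj (ModuleCat.of R M))) := by
  have hterm := isTerminalOpOfForallLE hb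
  have := isConnected_of_isTerminal _ hterm
  have := Functor.preservesInjectiveObjects_const_of_isTerminal (C := ModuleCat R) hterm
  have := preservesHomology_const_comp_lim (J := Pᵒᵖ) (C := ModuleCat R)
  obtain ⟨n, rfl⟩ := Nat.exists_eq_add_one_of_ne_zero hk.ne'
  exact Functor.isZero_rightDerived_obj_obj_succ _ lim (InjectiveResolution.of _) n

/-- If `P` is a filtered poset with a least element, then the constant functor with value
an `R`-module `M` is `lim`-acyclic: `H^k(P; M̲) = 0` for `k > 0`. -/
theorem higherLim_const_isZero_of_least
    (P : Type) [PartialOrder P] (d : P → ℕ) (hd : StrictMono d)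
    (b : P) (hb : ∀ p : P, b ≤ p)
    (R : Type) [CommRing R] [EnoughInjectives (Pᵒᵖ ⥤ ModuleCat R)]
    (M : Type) [AddCommGroup M] [Module R M]
    (k : ℕ) (hk : 0 < k) :
    IsZero (higherLim P R k ((Functor.const Pᵒᵖ).obj (ModuleCat.of R M))) :=
  higherLim_const_isZero_of_least_general P b hb R M k hk
end

section
/- Let R be a unital commutative ring and f : C → D a truncatable morphism of cochain complexes of R-modules, i.e., C and D are bounded above and nonzero with heights satisfying h(C) < h(D), and the differential D^{h(D)−1} → D^{h(D)} is surjective. Then there exist a cochain complex E of R-modules with E^k = 0 for all k > h(D), a quasi-isomorphism i : C → E and a degreewise surjective morphism π : E → D such that π ∘ i = f. -/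
/-!
Let `P(D)` be the path complex of `D`, with `P(D)^k = D^{k-1} ⊕ D^k` and
`d(y, z) = (z - dy, dz)`; it is contractible via `(y, z) ↦ (0, y)` and `(y, z) ↦ z` is a
degreewise surjective chain map `P(D) → D`. Its canonical truncation `T = τ^{≤ h(D)} P(D)` is still
contractible, vanishes above `h(D)`, and still surjects onto `D`: in degree `h(D)` it consists of
the pairs `(y, dy)`, so this is exactly where surjectivity of the last differential of `D` enters.
Then `E = C ⊕ T` works, with `i` the inclusion of `C` (a homotopy equivalence, as `T` is
contractible) and `π = (f, T → D)`.
-/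

open CategoryTheory CategoryTheory.Limits

namespace HomologicalComplex

variable {V : Type*} [Category V] [Preadditive V] [HasBinaryBiproducts V]
  {ι : Type*} {c : ComplexShape ι}

noncomputable def homotopyEquivBiprodOfContractible (C : HomologicalComplex V c)
    {T : HomologicalComplex V c} (h : Homotopy (𝟙 T) 0) : HomotopyEquiv C (C ⊞ T) where
  hom := biprod.inl
  inv := biprod.fst
  homotopyHomInvId := Homotopy.ofEq biprod.inl_fst
  homotopyInvHomId :=
    (Homotopy.ofEq (by simp)).trans <|
      ((Homotopy.refl (biprod.fst ≫ biprod.inl)).add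
        ((h.symm.compLeft biprod.snd).compRight biprod.inr)).trans (Homotopy.ofEq (by simp))

lemma isZero_biprod_X {C T : HomologicalComplex V c} {k : ι} (hC : IsZero (C.X k))
    (hT : IsZero (T.X k)) : IsZero ((C ⊞ T).X k) :=
  IsZero.of_iso ((biprod_isZero_iff _ _).2 ⟨hC, hT⟩) ((eval V c k).mapBiprod C T)

end HomologicalComplex

namespace CochainComplex

variable {R : Type*} [CommRing R] (D : CochainComplex (ModuleCat R) ℤ)

@[simp]
lemma d_d_apply (i j k : ℤ) (x : D.X i) : D.d j k (D.d i j x) = 0 := by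
  rw [← ModuleCat.comp_apply, D.d_comp_d]
  rfl

/-- Transport along `a = b`; needed since `D.X (k + 1 - 1)` is not definitionally `D.X k`. -/
def castX {a b : ℤ} (h : a = b) : D.X a →ₗ[R] D.X b := by
  subst h
  exact LinearMap.id

@[simp]
lemma castX_self {a : ℤ} (h : a = a) (x : D.X a) : D.castX h x = x := rfl

@[simp]
lemma castX_castX {a b c : ℤ} (h : a = b) (h' : b = c) (x : D.X a) :
    D.castX h' (D.castX h x) = D.castX (h.trans h') x := by
  subst h h'
  rfl

@[simp]
lemma castX_d {i a b : ℤ} (h : a = b) (x : D.X i) : D.castX h (D.d i a x) = D.d i b x := by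
  subst h
  rfl

@[simp]
lemma d_castX {a b c : ℤ} (h : a = b) (x : D.X a) : D.d b c (D.castX h x) = D.d a c x := by
  subst h
  rfl

variable (n : ℤ)

/-- Degree `k` of `τ^{≤ n} P(D)`: in degree `n` the cycles `z = dy` of `P(D)`, above `n` zero. -/
def truncLEPathX (k : ℤ) : Submodule R (D.X (k - 1) × D.X k) where
  carrier := {p | (n ≤ k → p.2 = D.d (k - 1) k p.1) ∧ (n < k → p.1 = 0)}
  add_mem' {p q} hp hq :=
    ⟨fun h => by rw [Prod.snd_add, hp.1 h, hq.1 h, ← map_add]; rfl,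
     fun h => by rw [Prod.fst_add, hp.2 h, hq.2 h, add_zero]⟩
  zero_mem' := ⟨fun _ => (map_zero _).symm, fun _ => rfl⟩
  smul_mem' r p hp :=
    ⟨fun h => by rw [Prod.smul_snd, hp.1 h, ← map_smul]; rfl,
     fun h => by rw [Prod.smul_fst, hp.2 h, smul_zero]⟩

def truncLEPathD (i j : ℤ) (hij : i + 1 = j) : D.truncLEPathX n i →ₗ[R] D.truncLEPathX n j where
  toFun p := ⟨(D.castX (by omega) p.1.2 - D.d (i - 1) (j - 1) p.1.1, D.d i j p.1.2), by
    refine ⟨fun _ => by simp, fun _ => ?_⟩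
    rw [p.2.1 (by omega)]
    simp⟩
  map_add' p q := by ext <;> simp; abel
  map_smul' r p := by ext <;> simp [smul_sub]

/-- Reducible, so that `simp` sees the objects and differentials of this complex. -/
abbrev truncLEPath : CochainComplex (ModuleCat R) ℤ where
  X k := ModuleCat.of R (D.truncLEPathX n k)
  d i j := if h : i + 1 = j then ModuleCat.ofHom (D.truncLEPathD n i j h) else 0
  shape i j h := dif_neg h
  d_comp_d' i j k (hij : i + 1 = j) (hjk : j + 1 = k) := by
    rw [dif_pos hij, dif_pos hjk]
    ext p <;> simp [truncLEPathD]

def truncLEPathπ : D.truncLEPath n ⟶ D where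
  f k := ModuleCat.ofHom ((LinearMap.snd R _ _).comp (D.truncLEPathX n k).subtype)
  comm' i j (hij : i + 1 = j) := by
    ext p
    simp [hij, truncLEPathD]

lemma isZero_truncLEPath_X {k : ℤ} (hk : n < k) : IsZero ((D.truncLEPath n).X k) := by
  have eq_zero (p : (D.truncLEPath n).X k) : p = 0 := by
    have hy : p.1.1 = 0 := p.2.2 hk
    ext
    · exact hy
    · simp [p.2.1 hk.le, hy]
  exact ModuleCat.isZero_iff_subsingleton.mpr (subsingleton_of_forall_eq 0 eq_zero)

lemma truncLEPathπ_f_surjective (hsurj : Function.Surjective (D.d (n - 1) n))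
    (hD : ∀ k, n < k → IsZero (D.X k)) (k : ℤ) :
    Function.Surjective ((D.truncLEPathπ n).f k) := by
  intro z
  rcases lt_trichotomy k n with hk | rfl | hk
  · exact ⟨⟨(0, z), fun h => absurd h (by omega), fun h => absurd h (by omega)⟩, rfl⟩
  · obtain ⟨y, rfl⟩ := hsurj z
    exact ⟨⟨(y, D.d (k - 1) k y), fun _ => rfl, fun h => absurd h (lt_irrefl k)⟩, rfl⟩
  · have := ModuleCat.subsingleton_of_isZero (hD k hk)
    exact ⟨0, Subsingleton.elim _ _⟩

def truncLEPathContractingHom (i j : ℤ) (hji : j + 1 = i) :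
    (D.truncLEPath n).X i ⟶ (D.truncLEPath n).X j :=
  ModuleCat.ofHom
    { toFun p := ⟨(0, D.castX (by omega) p.1.1),
        fun _ => by rw [p.2.2 (by omega)]; simp, fun _ => rfl⟩
      map_add' p q := by ext <;> simp
      map_smul' r p := by ext <;> simp }

lemma nullHomotopicMap'_truncLEPathContractingHom :
    Homotopy.nullHomotopicMap' (fun i j hji => D.truncLEPathContractingHom n i j hji) = 𝟙 _ := by
  ext k : 1
  rw [Homotopy.nullHomotopicMap'_f (show k - 1 + 1 = k by omega) (show k + 1 = k + 1 from rfl)]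
  ext p <;> simp [truncLEPathContractingHom, truncLEPathD]

noncomputable def truncLEPathContraction : Homotopy (𝟙 (D.truncLEPath n)) 0 :=
  (Homotopy.ofEq (D.nullHomotopicMap'_truncLEPathContractingHom n).symm).trans
    (Homotopy.nullHomotopy' _)

end CochainComplex

open HomologicalComplex CochainComplex in
theorem exists_factorisation_of_truncatable_general
    (R : Type) [CommRing R]
    (C D : CochainComplex (ModuleCat R) ℤ) (f : C ⟶ D)
    (hC hD : ℤ)
    (hCtop : ∀ k : ℤ, hC < k → IsZero (C.X k))
    (hDtop : ∀ k : ℤ, hD < k → IsZero (D.X k))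
    (hlt : hC < hD)
    (hsurj : Function.Surjective (D.d (hD - 1) hD)) :
    ∃ (E : CochainComplex (ModuleCat R) ℤ) (i : C ⟶ E) (π : E ⟶ D),
      (∀ k : ℤ, hD < k → IsZero (E.X k)) ∧ QuasiIso i ∧
      (∀ k : ℤ, Function.Surjective (π.f k)) ∧ i ≫ π = f := by
  refine ⟨C ⊞ D.truncLEPath hD, biprod.inl, biprod.desc f (D.truncLEPathπ hD),
    fun k hk => isZero_biprod_X (hCtop k (hlt.trans hk)) (D.isZero_truncLEPath_X hD hk),
    (C.homotopyEquivBiprodOfContractible (D.truncLEPathContraction hD)).quasiIso_hom,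
    fun k z => ?_, biprod.inl_desc _ _⟩
  obtain ⟨x, rfl⟩ := D.truncLEPathπ_f_surjective hD hsurj hDtop k z
  refine ⟨(biprod.inr : D.truncLEPath hD ⟶ C ⊞ _).f k x, ?_⟩
  rw [← ModuleCat.comp_apply, ← comp_f, biprod.inr_desc]

/-- a truncatable morphism `f : C ⟶ D` of cochain complexes of `R`-modules
(heights `hC < hD`, last differential of `D` surjective) factors as a quasi-isomorphism
followed by a degreewise surjection through a complex vanishing in degrees `> hD`. -/
theorem exists_factorisation_of_truncatable
    (R : Type) [CommRing R]
    (C D : CochainComplex (ModuleCat R) ℤ) (f : C ⟶ D)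
    (hC hD : ℤ)
    (hCtop : ∀ k : ℤ, hC < k → IsZero (C.X k)) (hCne : ¬ IsZero (C.X hC))
    (hDtop : ∀ k : ℤ, hD < k → IsZero (D.X k)) (hDne : ¬ IsZero (D.X hD))
    (hlt : hC < hD)
    (hsurj : Function.Surjective (D.d (hD - 1) hD)) :
    ∃ (E : CochainComplex (ModuleCat R) ℤ) (i : C ⟶ E) (π : E ⟶ D),
      (∀ k : ℤ, hD < k → IsZero (E.X k)) ∧ QuasiIso i ∧
      (∀ k : ℤ, Function.Surjective (π.f k)) ∧ i ≫ π = f :=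
  exists_factorisation_of_truncatable_general R C D f hC hD hCtop hDtop hlt hsurj
end

section
/- Let P be a filtered tree, i.e., a filtered poset whose Hasse diagram contains no undirected cycles, and let R be a unital commutative ring. Then for every functor F : P^op → R-Mod and every k > 1, H^k(P; F) = 0. -/
/-!
For every functor `F : Pᵒᵖ ⥤ R-Mod` the sequence `0 → lim F → ∏ₓ F(x) → ∏_{x ⋖ z} F(x)` is exact,
because in a filtered poset every relation `x ≤ z` is a finite chain of covers. When `F` is
injective the last map is onto as well: it is precomposition with the inclusion of the free functor
on the Hasse edges into the free functor on the points, which is a monomorphism because every edge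
of a forest is a bridge. Both products are exact functors of `F`, so dimension shifting along an
injective resolution gives `H^k(P; F) = 0` for `k ≥ 2`.
-/

open CategoryTheory CategoryTheory.Limits Opposite

namespace CategoryTheory

variable {C D : Type*} [Category C] [Abelian C] [Category D] [Abelian D]

lemma Functor.exactAt_mapHomologicalComplex {ι : Type*} {c : ComplexShape ι} (A : C ⥤ D)
    [A.PreservesZeroMorphisms] (hA : ∀ T : ShortComplex C, T.Exact → (T.map A).Exact)
    (K : HomologicalComplex C c) (i : ι) (hK : K.ExactAt i) :
    ((A.mapHomologicalComplex c).obj K).ExactAt i := by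
  rw [HomologicalComplex.exactAt_iff] at hK ⊢
  exact hA _ hK

/-- On an injective resolution `K` of `F`, the long exact homology sequence of
`0 → S.X₁ K → S.X₂ K → S.X₃ K → 0` places `H^(n+2) (S.X₁ K)` between `H^(n+1) (S.X₃ K) = 0` and
`H^(n+2) (S.X₂ K) = 0`. -/
lemma isZero_rightDerived_obj_of_injective_shortExact [HasInjectiveResolutions C]
    (S : ShortComplex (C ⥤ D)) [S.X₁.Additive] [S.X₂.PreservesZeroMorphisms]
    [S.X₃.PreservesZeroMorphisms]
    (hS : ∀ I : C, Injective I → (S.map ((evaluation C D).obj I)).ShortExact)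
    (h₂ : ∀ T : ShortComplex C, T.Exact → (T.map S.X₂).Exact)
    (h₃ : ∀ T : ShortComplex C, T.Exact → (T.map S.X₃).Exact) (F : C) (n : ℕ) :
    IsZero ((S.X₁.rightDerived (n + 2)).obj F) := by
  let I := injectiveResolution F
  let SK : ShortComplex (CochainComplex D ℕ) :=
    ShortComplex.mk ((NatTrans.mapHomologicalComplex S.f _).app I.cocomplex)
      ((NatTrans.mapHomologicalComplex S.g _).app I.cocomplex) (by
        rw [← NatTrans.comp_app, ← NatTrans.mapHomologicalComplex_comp, S.zero]
        rfl)
  have hSK : SK.ShortExact :=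
    (HomologicalComplex.shortExact_iff_degreewise_shortExact _).2
      fun i => hS _ (I.injective i)
  have h₃K : IsZero (SK.X₃.homology (n + 1)) :=
    (S.X₃.exactAt_mapHomologicalComplex h₃ _ _ (I.cocomplex_exactAt_succ n)).isZero_homology
  have h₂K : IsZero (SK.X₂.homology (n + 2)) :=
    (S.X₂.exactAt_mapHomologicalComplex h₂ _ _ (I.cocomplex_exactAt_succ _)).isZero_homology
  exact ((hSK.homology_exact₁ (n + 1) (n + 2) rfl).isZero_X₂ (h₃K.eq_of_src _ _)
    (h₂K.eq_of_tgt _ _)).of_iso (I.isoRightDerivedObj S.X₁ (n + 2))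

end CategoryTheory

lemma StrictMono.exists_le_covBy_of_lt {P : Type*} [Preorder P] {d : P → ℕ} (hd : StrictMono d)
    {x z : P} (h : x < z) : ∃ r, x ≤ r ∧ r ⋖ z := by
  obtain ⟨r, ⟨hxr, hrz⟩, hmax⟩ := (measure fun r => d z - d r).wf.has_min
    {r | x ≤ r ∧ r < z} ⟨x, le_rfl, h⟩
  refine ⟨r, hxr, hrz, fun c hrc hcz => hmax c ⟨hxr.trans hrc.le, hcz⟩ ?_⟩
  have := hd hrc
  have := hd hcz
  show d z - d c < d z - d r
  omega

namespace HigherLim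

abbrev HasseEdge (P : Type*) [PartialOrder P] : Type _ := {p : P × P // p.1 ⋖ p.2}

section Boundary

variable {P : Type*} [PartialOrder P]

lemma HasseEdge.adj_deleteEdges_of_ne {e e₀ : HasseEdge P} (h : e ≠ e₀) :
    ((SimpleGraph.hasse P).deleteEdges {s(e₀.1.1, e₀.1.2)}).Adj e.1.1 e.1.2 := by
  refine SimpleGraph.deleteEdges_adj.2 ⟨Or.inl e.2, ?_⟩
  rw [Set.mem_singleton_iff, Sym2.eq_iff]
  rintro (⟨h₁, h₂⟩ | ⟨h₁, h₂⟩)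
  · exact h (Subtype.ext (Prod.ext h₁ h₂))
  · exact (e.2.lt.trans (h₂ ▸ h₁ ▸ e₀.2.lt)).false

variable (R : Type*) [Ring R]

noncomputable def hasseBoundary (P : Type*) [PartialOrder P] :
    (HasseEdge P →₀ R) →ₗ[R] (P →₀ R) :=
  Finsupp.lmapDomain R R (fun e : HasseEdge P => e.1.1) -
    Finsupp.lmapDomain R R (fun e : HasseEdge P => e.1.2)

/-- Every Hasse edge `e₀` of a forest is a bridge; the indicator `χ` of the component of `e₀.2`
once `e₀` is deleted satisfies `χ ∘ ∂ = -(evaluation at e₀)`. -/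
lemma hasseBoundary_injective (htree : (SimpleGraph.hasse P).IsAcyclic) :
    Function.Injective (hasseBoundary R P) := by
  classical
  rw [← LinearMap.ker_eq_bot, Submodule.eq_bot_iff]
  intro c hc
  ext e₀
  let G := (SimpleGraph.hasse P).deleteEdges {s(e₀.1.1, e₀.1.2)}
  let χ : (P →₀ R) →ₗ[R] R :=
    Finsupp.linearCombination R fun x => if G.Reachable e₀.1.2 x then 1 else 0
  have hχ : χ ∘ₗ hasseBoundary R P = -Finsupp.lapply e₀ := by
    ext e
    by_cases he : e = e₀
    · subst he
      have hbridge : ¬ G.Reachable e.1.2 e.1.1 := fun hr =>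
        SimpleGraph.isAcyclic_iff_forall_adj_isBridge.mp htree (Or.inl e.2) hr.symm
      simp [χ, hasseBoundary, hbridge]
    · have hG := HasseEdge.adj_deleteEdges_of_ne he
      have : G.Reachable e₀.1.2 e.1.1 ↔ G.Reachable e₀.1.2 e.1.2 :=
        ⟨fun hr => hr.trans hG.reachable, fun hr => hr.trans hG.symm.reachable⟩
      simp [χ, hasseBoundary, this, Ne.symm he]
  simpa [LinearMap.mem_ker.mp hc] using LinearMap.congr_fun hχ c

end Boundary

universe u

variable {P : Type u} [PartialOrder P] {R : Type u} [Ring R]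

section Free

variable {S : Type u} {b : S → P}

variable (R b) in
/-- The direct sum over `i` of the free functors on the representables `P(-, b i)`: a map out of
it is a family of elements of the `I(b i)` (`freeAboveDesc`, `evalFreeMk`). -/
noncomputable abbrev freeAbove : Pᵒᵖ ⥤ ModuleCat.{u} R where
  obj y := (ModuleCat.free R).obj {i : S // y.unop ≤ b i}
  map f := (ModuleCat.free R).map <| TypeCat.ofHom <|
    Subtype.map id fun _ => (leOfHom f.unop).trans
  map_id y := by
    ext
    simp only [ModuleCat.free_map_apply, TypeCat.hom_ofHom, TypeCat.Fun.coe_mk, ModuleCat.hom_id,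
      LinearMap.id_coe, id_eq]
    rfl
  map_comp f g := by
    ext
    simp only [ModuleCat.free_map_apply, TypeCat.hom_ofHom, TypeCat.Fun.coe_mk,
      ModuleCat.hom_comp, LinearMap.coe_comp, Function.comp_apply]
    rfl

noncomputable def freeAboveDesc (I : Pᵒᵖ ⥤ ModuleCat.{u} R) (t : ∀ i, I.obj (op (b i))) :
    freeAbove R b ⟶ I where
  app y := ModuleCat.freeDesc <| TypeCat.ofHom fun i => I.map (homOfLE i.2).op (t i.1)
  naturality y y' f := by
    ext i
    simp only [ModuleCat.hom_comp, LinearMap.coe_comp, Function.comp_apply,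
      ModuleCat.free_map_apply, TypeCat.hom_ofHom, TypeCat.Fun.coe_mk, ModuleCat.freeDesc_apply,
      ← ConcreteCategory.comp_apply, ← Functor.map_comp]
    rfl

noncomputable def evalFreeMk {I : Pᵒᵖ ⥤ ModuleCat.{u} R} (σ : freeAbove R b ⟶ I) (i : S) :
    I.obj (op (b i)) :=
  σ.app (op (b i)) (ModuleCat.freeMk ⟨i, le_rfl⟩)

lemma evalFreeMk_freeAboveDesc {I : Pᵒᵖ ⥤ ModuleCat.{u} R} (t : ∀ i, I.obj (op (b i))) :
    evalFreeMk (freeAboveDesc I t) = t :=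
  funext fun i => by simp [evalFreeMk, freeAboveDesc]

end Free

variable (R) in
noncomputable def freeAboveBoundary :
    freeAbove R (fun e : HasseEdge P => e.1.1) ⟶ freeAbove R (fun x : P => x) where
  app y := (ModuleCat.free R).map (TypeCat.ofHom fun e => ⟨e.1.1.1, e.2⟩) -
    (ModuleCat.free R).map (TypeCat.ofHom fun e => ⟨e.1.1.2, e.2.trans e.1.2.le⟩)
  naturality y y' f := by
    ext e
    simp only [Preadditive.comp_sub, Preadditive.sub_comp, ModuleCat.hom_sub, ModuleCat.hom_comp,
      LinearMap.sub_apply, LinearMap.coe_comp, Function.comp_apply, ModuleCat.free_map_apply,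
      TypeCat.hom_ofHom, TypeCat.Fun.coe_mk]
    rfl

lemma freeAboveBoundary_app_injective (hinj : Function.Injective (hasseBoundary R P))
    (y : Pᵒᵖ) : Function.Injective ((freeAboveBoundary R).app y) := by
  have hsq (a : {e : HasseEdge P // y.unop ≤ e.1.1} →₀ R) :
      Finsupp.mapDomain Subtype.val ((freeAboveBoundary R).app y a) =
        hasseBoundary R P (Finsupp.mapDomain Subtype.val a) := by
    change Finsupp.mapDomain Subtype.val (Finsupp.mapDomain _ a - Finsupp.mapDomain _ a) =
      Finsupp.mapDomain _ (Finsupp.mapDomain Subtype.val a) -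
        Finsupp.mapDomain _ (Finsupp.mapDomain Subtype.val a)
    simp only [Finsupp.mapDomain_sub, ← Finsupp.mapDomain_comp]
    rfl
  intro a a' h
  exact Finsupp.mapDomain_injective Subtype.val_injective
    (hinj ((hsq a).symm.trans ((congrArg _ h).trans (hsq a'))))

section Products

variable {S : Type u} (b : S → P)

variable (R) in
noncomputable def piEval : (Pᵒᵖ ⥤ ModuleCat.{u} R) ⥤ ModuleCat.{u} R where
  obj F := ModuleCat.of R (∀ i, F.obj (op (b i)))
  map η := ModuleCat.ofHom <| LinearMap.pi fun i => (η.app (op (b i))).hom ∘ₗ LinearMap.proj i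

instance : (piEval R b).Additive where

lemma piEval_map_exact (T : ShortComplex (Pᵒᵖ ⥤ ModuleCat.{u} R)) (hT : T.Exact) :
    (T.map (piEval R b)).Exact := by
  rw [ShortComplex.moduleCat_exact_iff]
  intro s hs
  choose t ht using fun i => (ShortComplex.moduleCat_exact_iff _).1
    (hT.map ((evaluation _ _).obj (op (b i)))) (s i) (congrFun hs i)
  exact ⟨t, funext ht⟩

end Products

variable (R) in
noncomputable def limToPiEval : lim ⟶ piEval R (fun x : P => x) where
  app F := ModuleCat.ofHom <| LinearMap.pi fun x => (limit.π F (op x)).hom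
  naturality F G η := by
    refine ModuleCat.hom_ext (LinearMap.ext fun s => funext fun x => ?_)
    change limit.π G (op x) (limMap η s) = η.app (op x) (limit.π F (op x) s)
    rw [← ConcreteCategory.comp_apply, limMap_π]
    rfl

variable (R) in
noncomputable def hasseDiff :
    piEval R (fun x : P => x) ⟶ piEval R (fun e : HasseEdge P => e.1.1) where
  app F := ModuleCat.ofHom <| LinearMap.pi fun e =>
    LinearMap.proj e.1.1 -
      (F.map (homOfLE e.2.le).op).hom ∘ₗ LinearMap.proj (φ := fun x : P => F.obj (op x)) e.1.2
  naturality F G η := by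
    refine ModuleCat.hom_ext (LinearMap.ext fun s => funext fun e => ?_)
    change η.app _ (s e.1.1) - G.map _ (η.app _ (s e.1.2)) =
      η.app _ (s e.1.1 - F.map (homOfLE e.2.le).op (s e.1.2))
    rw [map_sub, NatTrans.naturality_apply]

variable (R) in
noncomputable abbrev hasseComplex : ShortComplex ((Pᵒᵖ ⥤ ModuleCat.{u} R) ⥤ ModuleCat.{u} R) :=
  ShortComplex.mk (limToPiEval R) (hasseDiff R) <| by
    refine NatTrans.ext (funext fun F =>
      ModuleCat.hom_ext (LinearMap.ext fun s => funext fun e => ?_))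
    change limit.π F _ s - F.map (homOfLE e.2.le).op (limit.π F _ s) = 0
    rw [sub_eq_zero, ← ConcreteCategory.comp_apply, limit.w]

lemma limToPiEval_app_injective (F : Pᵒᵖ ⥤ ModuleCat.{u} R) :
    Function.Injective ((limToPiEval R).app F) :=
  fun a a' h => Concrete.limit_ext F a a' fun y => congrFun h y.unop

lemma map_eq_of_hasseDiff_eq_zero {d : P → ℕ} (hd : StrictMono d) {F : Pᵒᵖ ⥤ ModuleCat.{u} R}
    {s : ∀ x, F.obj (op x)} (hs : (hasseDiff R).app F s = 0) {x z : P} (h : x ≤ z) :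
    F.map (homOfLE h).op (s z) = s x := by
  have := hd.wellFoundedLT
  induction z using WellFoundedLT.induction with
  | _ z ih =>
  obtain rfl | hxz := h.eq_or_lt
  · rw [show (homOfLE h).op = 𝟙 _ from rfl, F.map_id]
    rfl
  obtain ⟨r, hxr, hrz⟩ := hd.exists_le_covBy_of_lt hxz
  have hcov : F.map (homOfLE hrz.le).op (s z) = s r :=
    (sub_eq_zero.1 (congrFun hs ⟨(r, z), hrz⟩)).symm
  rw [← ih r hrz.lt hxr, ← hcov, ← ConcreteCategory.comp_apply, ← F.map_comp]
  rfl

lemma exists_limToPiEval_eq_of_hasseDiff_eq_zero {d : P → ℕ} (hd : StrictMono d)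
    {F : Pᵒᵖ ⥤ ModuleCat.{u} R} {s : ∀ x, F.obj (op x)} (hs : (hasseDiff R).app F s = 0) :
    ∃ t, (limToPiEval R).app F t = s := by
  let hF := isLimitOfPreserves (forget _) (limit.isLimit F)
  refine ⟨(Types.isLimitEquivSections hF).symm
    ⟨fun y => s y.unop, fun f => map_eq_of_hasseDiff_eq_zero hd hs (leOfHom f.unop)⟩, ?_⟩
  funext x
  exact Types.isLimitEquivSections_symm_apply hF _ (op x)

lemma hasseDiff_app_evalFreeMk {I : Pᵒᵖ ⥤ ModuleCat.{u} R}
    (σ : freeAbove R (fun x : P => x) ⟶ I) :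
    (hasseDiff R).app I (evalFreeMk σ) = evalFreeMk (freeAboveBoundary R ≫ σ) := by
  funext e
  change σ.app _ (ModuleCat.freeMk _) - I.map (homOfLE e.2.le).op (σ.app _ (ModuleCat.freeMk _)) =
    σ.app _ ((freeAboveBoundary R).app _ (ModuleCat.freeMk _))
  rw [← NatTrans.naturality_apply]
  simp only [freeAboveBoundary, ModuleCat.hom_sub, LinearMap.sub_apply, map_sub,
    ModuleCat.free_map_apply, TypeCat.hom_ofHom, TypeCat.Fun.coe_mk]
  rfl

lemma hasseDiff_app_surjective (hinj : Function.Injective (hasseBoundary R P))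
    (I : Pᵒᵖ ⥤ ModuleCat.{u} R) [Injective I] : Function.Surjective ((hasseDiff R).app I) := by
  intro t
  have (y : Pᵒᵖ) : Mono ((freeAboveBoundary R (P := P)).app y) :=
    (ModuleCat.mono_iff_injective _).2 (freeAboveBoundary_app_injective hinj y)
  have : Mono (freeAboveBoundary R (P := P)) := NatTrans.mono_of_mono_app _
  refine ⟨evalFreeMk (Injective.factorThru (freeAboveDesc I t) (freeAboveBoundary R)), ?_⟩
  rw [hasseDiff_app_evalFreeMk, Injective.comp_factorThru]
  exact evalFreeMk_freeAboveDesc t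

lemma hasseComplex_shortExact {d : P → ℕ} (hd : StrictMono d)
    (hinj : Function.Injective (hasseBoundary R P)) (I : Pᵒᵖ ⥤ ModuleCat.{u} R) [Injective I] :
    ((hasseComplex R).map ((evaluation _ _).obj I)).ShortExact where
  exact := (ShortComplex.moduleCat_exact_iff _).2 fun _ hs =>
    exists_limToPiEval_eq_of_hasseDiff_eq_zero hd hs
  mono_f := (ModuleCat.mono_iff_injective _).2 (limToPiEval_app_injective I)
  epi_g := (ModuleCat.epi_iff_surjective _).2 (hasseDiff_app_surjective hinj I)

end HigherLim

/-- If `P` is a filtered tree (a filtered poset whose Hasse diagram is acyclic), then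
`H^k(P; F) = 0` for every `k > 1`. -/
theorem higherLim_isZero_of_tree
    (P : Type) [PartialOrder P] (d : P → ℕ) (hd : StrictMono d)
    (htree : (SimpleGraph.hasse P).IsAcyclic)
    (R : Type) [CommRing R] [EnoughInjectives (Pᵒᵖ ⥤ ModuleCat R)]
    (F : Pᵒᵖ ⥤ ModuleCat R)
    (k : ℕ) (hk : 1 < k) :
    IsZero (higherLim P R k F) := by
  obtain ⟨n, rfl⟩ : ∃ n, k = n + 2 := ⟨k - 2, by omega⟩
  exact isZero_rightDerived_obj_of_injective_shortExact (HigherLim.hasseComplex R)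
    (fun I _ => HigherLim.hasseComplex_shortExact hd (HigherLim.hasseBoundary_injective R htree) I)
    (HigherLim.piEval_map_exact _) (HigherLim.piEval_map_exact _) F n
end
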